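/- A d-dimensional linear subspace of ℝ^N in general position (intersecting every coordinate hyperplane transversally in the appropriate sense) intersects exactly 2·∑_{k=0}^{d-1} C(N-1, k) open orthants of ℝ^N. -/

import Mathlib

/-!
Deletion–restriction. A sign vector `ε` of the last `N - 1` functionals extends to a realizable
sign vector of all `N` in at least one way iff it is realizable, and in both ways iff it is
realizable on the hyperplane `ker w₀`: points on the two sides of the hyperplane have a positive
combination on it, and a point on it can be pushed slightly to either side. So the count
`c(N, d)` satisfies `c(N, d) = c(N - 1, d) + c(N - 1, d - 1)`, both families inheriting general
position, and Pascal's rule with `c(d, d) = 2 ^ d` and `c(N, 0) = 0` gives the formula.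
-/

open Finset Module Filter Topology

def boolSign (b : Bool) : ℝ := if b then 1 else -1

@[simp] lemma boolSign_true : boolSign true = 1 := rfl

@[simp] lemma boolSign_false : boolSign false = -1 := rfl

lemma boolSign_mul_self (b : Bool) : boolSign b * boolSign b = 1 := by
  cases b <;> norm_num

section SignVectors

variable {E : Type*} [AddCommGroup E] [Module ℝ E] {ι : Type*}

/-- The subspace of the paper is the image of `x ↦ (w i x)ᵢ`; it meets the open orthant with
sign vector `ε` iff `signCone w ε` is nonempty. -/
def signCone (w : ι → Dual ℝ E) (ε : ι → Bool) : Set E :=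
  {x | ∀ i, 0 < boolSign (ε i) * w i x}

def realizableSigns (w : ι → Dual ℝ E) : Set (ι → Bool) :=
  {ε | (signCone w ε).Nonempty}

def GeneralPosition (d : ℕ) (w : ι → Dual ℝ E) : Prop :=
  ∀ f : Fin d → ι, Function.Injective f → ∀ x : E, (∀ j, w (f j) x = 0) → x = 0

section OneFunctional

variable {w : ι → Dual ℝ E} {ε : ι → Bool} {l : Dual ℝ E}

lemma exists_mem_signCone_apply_eq_zero {x y : E} (hx : x ∈ signCone w ε)
    (hy : y ∈ signCone w ε) (hlx : 0 < l x) (hly : l y < 0) :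
    ∃ z ∈ signCone w ε, l z = 0 := by
  refine ⟨(-l y) • x + l x • y, fun i => ?_, by simp only [map_add, map_smul, smul_eq_mul]; ring⟩
  have hcomb : boolSign (ε i) * w i ((-l y) • x + l x • y)
      = -l y * (boolSign (ε i) * w i x) + l x * (boolSign (ε i) * w i y) := by
    simp only [map_add, map_smul, smul_eq_mul]; ring
  rw [hcomb]
  exact add_pos (mul_pos (neg_pos.2 hly) (hx i)) (mul_pos hlx (hy i))

lemma eventually_add_smul_mem_signCone [Finite ι] {x : E} (hx : x ∈ signCone w ε) (v : E) :
    ∀ᶠ t in 𝓝 (0 : ℝ), x + t • v ∈ signCone w ε := by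
  refine eventually_all.2 fun i => ?_
  have hcont : Continuous fun t : ℝ => boolSign (ε i) * w i (x + t • v) := by
    simp only [map_add, map_smul, smul_eq_mul]; fun_prop
  exact continuousAt_const.eventually_lt hcont.continuousAt (by simpa using hx i)

lemma exists_mem_signCone_pos_and_neg [Finite ι] (hl : l ≠ 0) {x : E}
    (hx : x ∈ signCone w ε) (hlx : l x = 0) :
    (∃ y ∈ signCone w ε, 0 < l y) ∧ ∃ y ∈ signCone w ε, l y < 0 := by
  obtain ⟨v, hv⟩ := LinearMap.surjective hl 1
  have hline : ∀ t : ℝ, l (x + t • v) = t := by simp [hlx, hv]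
  have hnear := eventually_add_smul_mem_signCone hx v
  obtain ⟨t, ht, htpos⟩ :=
    ((hnear.filter_mono nhdsWithin_le_nhds).and (self_mem_nhdsWithin (s := Set.Ioi 0))).exists
  obtain ⟨s, hs, hsneg⟩ :=
    ((hnear.filter_mono nhdsWithin_le_nhds).and (self_mem_nhdsWithin (s := Set.Iio 0))).exists
  exact ⟨⟨_, ht, (hline t).symm ▸ htpos⟩, ⟨_, hs, (hline s).symm ▸ hsneg⟩⟩

end OneFunctional

section Cons

variable {n : ℕ} {l : Dual ℝ E} {w : Fin n → Dual ℝ E} {ε : Fin n → Bool}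

lemma mem_signCone_cons {b : Bool} {x : E} :
    x ∈ signCone (Fin.cons l w) (Fin.cons b ε) ↔ 0 < boolSign b * l x ∧ x ∈ signCone w ε :=
  Fin.forall_fin_succ

lemma cons_mem_realizableSigns_iff {b : Bool} :
    Fin.cons b ε ∈ realizableSigns (Fin.cons l w) ↔ ∃ x ∈ signCone w ε, 0 < boolSign b * l x := by
  simp only [realizableSigns, Set.mem_ofPred_eq, Set.Nonempty, mem_signCone_cons]
  exact exists_congr fun x => and_comm

lemma cons_true_or_cons_false_mem_realizableSigns_iff (hl : l ≠ 0) :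
    (Fin.cons true ε ∈ realizableSigns (Fin.cons l w) ∨
      Fin.cons false ε ∈ realizableSigns (Fin.cons l w)) ↔ ε ∈ realizableSigns w := by
  simp only [cons_mem_realizableSigns_iff, boolSign_true, boolSign_false, one_mul, neg_one_mul,
    neg_pos]
  constructor
  · rintro (⟨x, hx, -⟩ | ⟨x, hx, -⟩) <;> exact ⟨x, hx⟩
  · rintro ⟨x, hx⟩
    rcases lt_trichotomy (l x) 0 with hneg | hzero | hpos
    · exact .inr ⟨x, hx, hneg⟩
    · exact .inl (exists_mem_signCone_pos_and_neg hl hx hzero).1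
    · exact .inl ⟨x, hx, hpos⟩

lemma mem_realizableSigns_restrict_ker_iff :
    ε ∈ realizableSigns (fun i => (w i).comp (LinearMap.ker l).subtype) ↔
      ∃ x ∈ signCone w ε, l x = 0 :=
  ⟨fun ⟨x, hx⟩ => ⟨x, hx, x.2⟩, fun ⟨x, hx, hlx⟩ => ⟨⟨x, hlx⟩, hx⟩⟩

lemma cons_true_and_cons_false_mem_realizableSigns_iff (hl : l ≠ 0) :
    (Fin.cons true ε ∈ realizableSigns (Fin.cons l w) ∧
      Fin.cons false ε ∈ realizableSigns (Fin.cons l w)) ↔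
      ε ∈ realizableSigns (fun i => (w i).comp (LinearMap.ker l).subtype) := by
  simp only [cons_mem_realizableSigns_iff, boolSign_true, boolSign_false, one_mul, neg_one_mul,
    neg_pos, mem_realizableSigns_restrict_ker_iff]
  constructor
  · rintro ⟨⟨x, hx, hlx⟩, ⟨y, hy, hly⟩⟩
    exact exists_mem_signCone_apply_eq_zero hx hy hlx hly
  · rintro ⟨x, hx, hlx⟩
    exact exists_mem_signCone_pos_and_neg hl hx hlx

end Cons

end SignVectors

lemma ncard_eq_ncard_cons_or_add_ncard_cons_and {M : ℕ} (S : Set (Fin (M + 1) → Bool)) :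
    S.ncard = {ε | Fin.cons true ε ∈ S ∨ Fin.cons false ε ∈ S}.ncard +
      {ε | Fin.cons true ε ∈ S ∧ Fin.cons false ε ∈ S}.ncard := by
  rw [Set.ofPred_or, Set.ofPred_and, Set.ncard_union_add_ncard_inter]
  have e : S ≃ Σ b : Bool, {ε : Fin M → Bool // Fin.cons b ε ∈ S} :=
    ((Fin.consEquiv fun _ => Bool).subtypeEquiv fun _ => Iff.rfl).symm.trans
      (Equiv.subtypeProdEquivSigmaSubtype fun b ε => Fin.cons b ε ∈ S)
  rw [← Nat.card_coe_set_eq, Nat.card_congr e, Nat.card_sigma, Fintype.sum_bool]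
  rfl

lemma ncard_realizableSigns_cons {E : Type*} [AddCommGroup E] [Module ℝ E] {M : ℕ}
    {l : Dual ℝ E} (hl : l ≠ 0) (w : Fin M → Dual ℝ E) :
    (realizableSigns (Fin.cons l w)).ncard = (realizableSigns w).ncard +
      (realizableSigns fun i => (w i).comp (LinearMap.ker l).subtype).ncard := by
  rw [ncard_eq_ncard_cons_or_add_ncard_cons_and]
  simp only [cons_true_or_cons_false_mem_realizableSigns_iff hl,
    cons_true_and_cons_false_mem_realizableSigns_iff hl, Set.ofPred_mem_eq]

lemma realizableSigns_eq_empty {E ι : Type*} [AddCommGroup E] [Module ℝ E] [Subsingleton E]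
    [Nonempty ι] (w : ι → Dual ℝ E) : realizableSigns w = ∅ := by
  refine Set.eq_empty_of_forall_notMem fun ε ⟨x, hx⟩ => ?_
  simpa [Subsingleton.elim x 0] using hx (Classical.arbitrary ι)

section GeneralPosition

variable {E : Type*} [AddCommGroup E] [Module ℝ E] {d : ℕ}

lemma GeneralPosition.comp {ι κ : Type*} {w : ι → Dual ℝ E} (hw : GeneralPosition d w)
    {g : κ → ι} (hg : Function.Injective g) : GeneralPosition d (w ∘ g) :=
  fun f hf => hw (g ∘ f) (hg.comp hf)

lemma GeneralPosition.restrict_ker {n : ℕ} {l : Dual ℝ E} {w : Fin n → Dual ℝ E}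
    (hw : GeneralPosition (d + 1) (Fin.cons l w)) :
    GeneralPosition d fun i => (w i).comp (LinearMap.ker l).subtype := by
  intro f hf x hx
  have hinj : Function.Injective (Fin.cons 0 (Fin.succ ∘ f) : Fin (d + 1) → Fin (n + 1)) :=
    Fin.cons_injective_iff.2
      ⟨fun ⟨j, hj⟩ => Fin.succ_ne_zero _ hj, (Fin.succ_injective _).comp hf⟩
  refine Subtype.ext (hw _ hinj x (Fin.cases x.2 fun j => ?_))
  simpa using hx j

lemma GeneralPosition.exists_forall_apply_eq [FiniteDimensional ℝ E] {w : Fin d → Dual ℝ E}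
    (hw : GeneralPosition d w) (hE : finrank ℝ E = d) (c : Fin d → ℝ) :
    ∃ x : E, ∀ j, w j x = c j := by
  have hinj : Function.Injective (LinearMap.pi w) :=
    (injective_iff_map_eq_zero _).2 fun x hx => hw id Function.injective_id x (congrFun hx)
  obtain ⟨x, hx⟩ := ((LinearMap.injective_iff_surjective_of_finrank_eq_finrank
    (by rw [hE, finrank_fin_fun])).1 hinj) c
  exact ⟨x, congrFun hx⟩

lemma GeneralPosition.ne_zero [FiniteDimensional ℝ E] {N : ℕ} {w : Fin N → Dual ℝ E}
    (hw : GeneralPosition d w) (hE : finrank ℝ E = d) (hd : 0 < d) (hdN : d ≤ N) (i : Fin N) :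
    w i ≠ 0 := by
  let j₀ : Fin d := ⟨0, hd⟩
  let f : Fin d → Fin N := Equiv.swap (Fin.castLE hdN j₀) i ∘ Fin.castLE hdN
  have hf : Function.Injective f := (Equiv.injective _).comp (Fin.castLE_injective hdN)
  obtain ⟨x, hx⟩ := (hw.comp hf).exists_forall_apply_eq hE (Pi.single j₀ 1)
  intro hi
  simpa [f, hi] using hx j₀

lemma realizableSigns_eq_univ [FiniteDimensional ℝ E] {w : Fin d → Dual ℝ E}
    (hw : GeneralPosition d w) (hE : finrank ℝ E = d) : realizableSigns w = Set.univ := by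
  refine Set.eq_univ_of_forall fun ε => ?_
  obtain ⟨x, hx⟩ := hw.exists_forall_apply_eq hE fun i => boolSign (ε i)
  exact ⟨x, fun i => by rw [hx, boolSign_mul_self]; exact one_pos⟩

end GeneralPosition

lemma sum_range_choose_succ (m e : ℕ) :
    ∑ k ∈ range (e + 1), (m + 1).choose k =
      ∑ k ∈ range (e + 1), m.choose k + ∑ k ∈ range e, m.choose k := by
  rw [sum_range_succ', sum_range_succ' _ e]
  simp only [Nat.choose_succ_succ, Nat.choose_zero_right, sum_add_distrib]
  ring

theorem ncard_realizableSigns {E : Type*} [AddCommGroup E] [Module ℝ E] [FiniteDimensional ℝ E]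
    {N d : ℕ} (w : Fin N → Dual ℝ E) (hw : GeneralPosition d w) (hE : finrank ℝ E = d)
    (hN : 0 < N) (hdN : d ≤ N) :
    (realizableSigns w).ncard = 2 * ∑ k ∈ range d, (N - 1).choose k := by
  induction N generalizing E d with
  | zero => omega
  | succ M ih =>
    rcases hdN.eq_or_lt with rfl | hdM
    · rw [realizableSigns_eq_univ hw hE, Set.ncard_univ, Nat.card_eq_fintype_card,
        Fintype.card_fun, Fintype.card_bool, Fintype.card_fin, Nat.add_sub_cancel,
        Nat.sum_range_choose, pow_succ']
    obtain _ | e := d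
    · have : Subsingleton E := finrank_zero_iff.1 hE
      simp [realizableSigns_eq_empty]
    have hl := hw.ne_zero hE e.succ_pos hdN 0
    have hker : finrank ℝ (LinearMap.ker (w 0)) = e := by
      have := Dual.finrank_ker_add_one_of_ne_zero hl
      omega
    rw [← Fin.cons_self_tail w] at hw ⊢
    obtain ⟨m, rfl⟩ : ∃ m, M = m + 1 := ⟨M - 1, by omega⟩
    rw [ncard_realizableSigns_cons hl,
      ih (Fin.tail w) (hw.comp (Fin.succ_injective _)) hE m.succ_pos (by omega),
      ih _ hw.restrict_ker hker m.succ_pos (by omega)]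
    simp only [Nat.add_sub_cancel, sum_range_choose_succ]
    ring

/-- A `d`-dimensional subspace of `ℝ^N` in general position (column space of an
`N × d` matrix `W` all of whose `d × d` submatrices are invertible) intersects
exactly `2 ∑_{k=0}^{d-1} C(N-1, k)` open orthants of `ℝ^N`. -/
theorem subspace_orthant_count (N d : ℕ) (hd : 0 < d) (hdN : d ≤ N)
    (W : Matrix (Fin N) (Fin d) ℝ)
    (hgen : ∀ f : Fin d → Fin N, Function.Injective f →
      (W.submatrix f id).det ≠ 0) :
    Nat.card {ε : Fin N → Bool //
        ∃ x : Fin d → ℝ, ∀ i : Fin N,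
          0 < (if ε i then (1:ℝ) else -1) * W.mulVec x i} =
      2 * ∑ k ∈ Finset.range d, (N - 1).choose k := by
  let w : Fin N → Dual ℝ (Fin d → ℝ) := fun i => (LinearMap.proj i).comp W.mulVecLin
  have hw : GeneralPosition d w := fun f hf x hx =>
    Matrix.eq_zero_of_mulVec_eq_zero (hgen f hf)
      (funext fun j => by simpa [w, Matrix.mulVec, dotProduct] using hx j)
  exact ncard_realizableSigns w hw (finrank_fin_fun ℝ) (hd.trans_le hdN) hdN
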